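/- arXiv:cs/0601074 — 6 statements merged into one kernel-verified Lean document; each statement's English description precedes it below -/
import Mathlib

section
/- Let {P_θ : θ ∈ Θ} be a family of probability measures on ℝ^d, each absolutely continuous with density p_θ, and let 𝒜_Θ be its Yatracos class. Let μ be an arbitrary probability measure on ℝ^d and for each θ ∈ Θ set Δ_θ := sup_{A ∈ 𝒜_Θ} |P_θ(A) − μ(A)|. If ε > 0 and θ* ∈ Θ satisfies Δ_{θ*} ≤ inf_{η ∈ Θ} Δ_η + ε, then for every θ ∈ Θ one has d_V(P_θ, P_{θ*}) ≤ 2 Δ_θ + (3/2) ε. -/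
open MeasureTheory

/-- The variational distance `d_V(P,Q) = sup_B |P(B) - Q(B)|`, the supremum
over all measurable sets `B`. -/
noncomputable def dV {X : Type*} [MeasurableSpace X] (P Q : Measure X) : ℝ :=
  ⨆ B : {s : Set X // MeasurableSet s}, |(P B.1).toReal - (Q B.1).toReal|

/-- Auxiliary: if `h ≥ 0` on `A` and `h ≤ 0` off `A`, then `∫_B h ≤ ∫_A h`. -/
lemma aux_setInt_le {X : Type*} [MeasurableSpace X] (μ : Measure X) (h : X → ℝ)
    (hint : Integrable h μ) (A B : Set X) (hA : MeasurableSet A)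
    (hpos : ∀ x ∈ A, 0 ≤ h x) (hneg : ∀ x ∉ A, h x ≤ 0) :
    ∫ x in B, h x ∂μ ≤ ∫ x in A, h x ∂μ := by
  have hsplit := integral_inter_add_diff (μ := μ) (f := h) (s := B) hA hint.integrableOn
  have h1 : ∫ x in B ∩ A, h x ∂μ ≤ ∫ x in A, h x ∂μ := by
    refine setIntegral_mono_set hint.integrableOn ?_ ?_
    · filter_upwards [ae_restrict_mem hA] with x hx using hpos x hx
    · exact HasSubset.Subset.eventuallyLE Set.inter_subset_right
  have h2 : ∫ x in B \ A, h x ∂μ ≤ 0 := by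
    refine setIntegral_nonpos_of_ae_restrict ?_
    have hnull : μ.restrict (B \ A) A = 0 := by
      rw [Measure.restrict_apply hA]
      simp [Set.inter_diff_self]
    refine measure_mono_null ?_ hnull
    intro x hx
    simp only [Set.mem_compl_iff, Set.mem_setOf_eq, Pi.zero_apply, not_le] at hx
    by_contra hxA
    exact absurd (hneg x hxA) (not_le.mpr hx)
  linarith

/-- **Minimum-distance density estimation (Devroye–Lugosi).**
Let `{P_θ : θ ∈ Θ}` be a family of probability measures on `ℝ^d`, each absolutely
continuous with density `p_θ`, and let `𝒜` be its Yatracos class.  Let `μ` be an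
arbitrary probability measure, `Δ_θ := sup_{A ∈ 𝒜} |P_θ(A) - μ(A)|`.  If `ε > 0` and
`θ*` satisfies `Δ_{θ*} ≤ inf_η Δ_η + ε`, then for every `θ`,
`d_V(P_θ, P_{θ*}) ≤ 2 Δ_θ + (3/2) ε`. -/
theorem stmt0 {d : ℕ} {Θ : Type*}
    (p : Θ → EuclideanSpace ℝ (Fin d) → ℝ)
    (hpm : ∀ θ, Measurable (p θ)) (hp0 : ∀ θ x, 0 ≤ p θ x)
    (P : Θ → Measure (EuclideanSpace ℝ (Fin d)))
    (hPprob : ∀ θ, IsProbabilityMeasure (P θ))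
    (hdens : ∀ θ, P θ = volume.withDensity fun x => ENNReal.ofReal (p θ x))
    (μ : Measure (EuclideanSpace ℝ (Fin d))) [IsProbabilityMeasure μ]
    (𝒜 : Set (Set (EuclideanSpace ℝ (Fin d))))
    (h𝒜 : 𝒜 = {s | ∃ θ η : Θ, θ ≠ η ∧ s = {x | p θ x > p η x}})
    (Δ : Θ → ℝ)
    (hΔ : ∀ θ, Δ θ = ⨆ A : 𝒜, |(P θ A.1).toReal - (μ A.1).toReal|)
    (ε : ℝ) (hε : 0 < ε) (θstar : Θ)
    (hmin : Δ θstar ≤ (⨅ η : Θ, Δ η) + ε) :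
    ∀ θ : Θ, dV (P θ) (P θstar) ≤ 2 * Δ θ + (3 / 2) * ε := by
  -- general facts
  have hΔnonneg : ∀ θ, 0 ≤ Δ θ := fun θ => by
    rw [hΔ θ]; exact Real.iSup_nonneg fun A => abs_nonneg _
  have hPB : ∀ (θ : Θ) (B : Set (EuclideanSpace ℝ (Fin d))), MeasurableSet B →
      ((P θ) B).toReal = ∫ x in B, p θ x := by
    intro θ B hB
    rw [hdens θ, withDensity_apply _ hB,
      integral_eq_lintegral_of_nonneg_ae (Filter.Eventually.of_forall (hp0 θ))
        (hpm θ).aestronglyMeasurable]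
  have hint : ∀ θ, Integrable (p θ) (volume : Measure (EuclideanSpace ℝ (Fin d))) := by
    intro θ
    have h1 : ∫⁻ x, ENNReal.ofReal (p θ x) = 1 := by
      have := (hPprob θ).measure_univ
      rw [hdens θ, withDensity_apply _ MeasurableSet.univ, Measure.restrict_univ] at this
      exact this
    refine ⟨(hpm θ).aestronglyMeasurable, ?_⟩
    rw [hasFiniteIntegral_iff_ofReal (Filter.Eventually.of_forall (hp0 θ)), h1]
    exact ENNReal.one_lt_top
  have htot : ∀ θ, ∫ x, p θ x = 1 := by
    intro θ
    have := hPB θ Set.univ MeasurableSet.univ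
    rw [(hPprob θ).measure_univ, Measure.restrict_univ] at this
    simpa using this.symm
  haveI : Nonempty {s : Set (EuclideanSpace ℝ (Fin d)) // MeasurableSet s} :=
    ⟨⟨∅, MeasurableSet.empty⟩⟩
  intro θ
  by_cases hθ : θ = θstar
  · subst hθ
    have h0 : dV (P θ) (P θ) ≤ 0 := ciSup_le fun B => by simp
    have := hΔnonneg θ
    linarith
  · set A : Set (EuclideanSpace ℝ (Fin d)) := {x | p θstar x < p θ x} with hAdef
    have hAmeas : MeasurableSet A := measurableSet_lt (hpm θstar) (hpm θ)
    have hA𝒜 : A ∈ 𝒜 := by rw [h𝒜]; exact ⟨θ, θstar, hθ, rfl⟩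
    have hfint := hint θ
    have hgint := hint θstar
    have hfg : Integrable (fun x => p θ x - p θstar x) (volume : Measure (EuclideanSpace ℝ (Fin d))) := hfint.sub hgint
    have hgf : Integrable (fun x => p θstar x - p θ x) (volume : Measure (EuclideanSpace ℝ (Fin d))) := hgint.sub hfint
    set D : ℝ := ∫ x in A, (p θ x - p θstar x) with hD
    -- key bound for every measurable set B
    have key : ∀ B : Set (EuclideanSpace ℝ (Fin d)), MeasurableSet B →
        |((P θ) B).toReal - ((P θstar) B).toReal| ≤ D := by
      intro B hB
      have hsub : ((P θ) B).toReal - ((P θstar) B).toReal = ∫ x in B, (p θ x - p θstar x) := by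
        rw [hPB θ B hB, hPB θstar B hB,
          integral_sub hfint.integrableOn hgint.integrableOn]
      rw [hsub]
      have hup : ∫ x in B, (p θ x - p θstar x) ≤ D :=
        aux_setInt_le _ (fun x => p θ x - p θstar x) hfg A B hAmeas
          (fun x hx => by simp only [hAdef, Set.mem_setOf_eq] at hx; linarith)
          (fun x hx => by simp only [hAdef, Set.mem_setOf_eq, not_lt] at hx; linarith)
      have hdown : ∫ x in B, (p θstar x - p θ x) ≤ ∫ x in Aᶜ, (p θstar x - p θ x) :=
        aux_setInt_le _ (fun x => p θstar x - p θ x) hgf Aᶜ B hAmeas.compl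
          (fun x hx => by
            simp only [hAdef, Set.mem_compl_iff, Set.mem_setOf_eq, not_lt] at hx; linarith)
          (fun x hx => by
            simp only [hAdef, Set.mem_compl_iff, Set.mem_setOf_eq, not_lt, not_not] at hx
            linarith)
      have hcompl : (∫ x in A, (p θstar x - p θ x)) + ∫ x in Aᶜ, (p θstar x - p θ x)
          = ∫ x, (p θstar x - p θ x) :=
        integral_add_compl hAmeas hgf
      have htotal : ∫ x, (p θstar x - p θ x) = 0 := by
        rw [integral_sub hgint hfint, htot θ, htot θstar]; ring
      have hnegA : ∫ x in A, (p θstar x - p θ x) = -D := by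
        rw [hD, ← integral_neg]
        exact integral_congr_ae (Filter.Eventually.of_forall fun x => by ring)
      have hBneg : ∫ x in B, (p θstar x - p θ x) = -∫ x in B, (p θ x - p θstar x) := by
        rw [← integral_neg]
        exact integral_congr_ae (Filter.Eventually.of_forall fun x => by ring)
      rw [abs_le]
      refine ⟨by linarith, hup⟩
    have hdV : dV (P θ) (P θstar) ≤ D := ciSup_le fun B => key B.1 B.2
    -- D ≤ Δ θ + Δ θstar
    have hbdd : ∀ θ' : Θ, BddAbove (Set.range fun A : 𝒜 => |((P θ') A.1).toReal - (μ A.1).toReal|) := by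
      intro θ'
      refine ⟨2, ?_⟩
      rintro x ⟨S, rfl⟩
      have h1 : ((P θ') S.1).toReal ≤ 1 :=
        le_trans (ENNReal.toReal_mono ENNReal.one_ne_top (prob_le_one (μ := P θ') (s := S.1)))
          (by simp)
      have h2 : (μ S.1).toReal ≤ 1 :=
        le_trans (ENNReal.toReal_mono ENNReal.one_ne_top (prob_le_one (μ := μ) (s := S.1))) (by simp)
      have h3 : (0:ℝ) ≤ ((P θ') S.1).toReal := ENNReal.toReal_nonneg
      have h4 : (0:ℝ) ≤ (μ S.1).toReal := ENNReal.toReal_nonneg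
      rw [abs_le]; constructor <;> linarith
    have hΔle : ∀ θ' : Θ, |((P θ') A).toReal - (μ A).toReal| ≤ Δ θ' := by
      intro θ'
      rw [hΔ θ']
      exact le_ciSup (hbdd θ') ⟨A, hA𝒜⟩
    have hDval : D = ((P θ) A).toReal - ((P θstar) A).toReal := by
      rw [hD, hPB θ A hAmeas, hPB θstar A hAmeas,
        integral_sub hfint.integrableOn hgint.integrableOn]
    have hDle : D ≤ Δ θ + Δ θstar := by
      rw [hDval]
      have h2 := hΔle θ
      have h3 := hΔle θstar
      calc ((P θ) A).toReal - ((P θstar) A).toReal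
          ≤ |((P θ) A).toReal - (μ A).toReal| + |(μ A).toReal - ((P θstar) A).toReal| :=
            le_trans (le_abs_self _) (abs_sub_le _ _ _)
        _ ≤ Δ θ + Δ θstar := by rw [abs_sub_comm (μ A).toReal]; exact add_le_add h2 h3
    -- Δ θstar ≤ Δ θ + ε
    have hstar : Δ θstar ≤ Δ θ + ε := by
      have hbb : BddBelow (Set.range Δ) := ⟨0, by rintro x ⟨η, rfl⟩; exact hΔnonneg η⟩
      have := ciInf_le hbb θ
      linarith
    linarith
end

section
/- Let P and Q be probability measures on a measurable space 𝒳, let K > 0 and n ≥ 1, and let g : 𝒳^n → ℝ be a bounded measurable function satisfying |g(x^n) − g(y^n)| ≤ K · #{i ∈ {1,…,n} : x_i ≠ y_i} for all x^n, y^n ∈ 𝒳^n. Then |∫ g dP^{⊗n} − ∫ g dQ^{⊗n}| ≤ n K · d_V(P, Q). -/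
open MeasureTheory

open Set

/-!
Induction on `n`, peeling off the first coordinate. With `G_μ x = ∫ g (x, y) dμ^{⊗n}(y)`, the
difference of the two integrals is `∫ (G_P - G_Q) dP + (∫ G_Q dP - ∫ G_Q dQ)`. The first term is
controlled by the induction hypothesis applied to the sections `g (x, ·)`. For the second, changing
the first coordinate moves `g` by at most `K`, so `G_Q` takes values in some `[m, m + K]`, and the
layer-cake formula `∫ (f - m) dμ = ∫₀ᴷ μ {f - m ≥ t} dt` writes the difference of its integrals
as an integral over `[0, K]` of `P {f - m ≥ t} - Q {f - m ≥ t}`, which is at most `d_V(P, Q)`.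
-/

lemma integrable_of_abs_sub_le {Y : Type*} [MeasurableSpace Y] {μ : Measure Y}
    [IsFiniteMeasure μ] {f : Y → ℝ} {C : ℝ} (hf : Measurable f)
    (hC : ∀ x y, |f x - f y| ≤ C) : Integrable f μ := by
  rcases isEmpty_or_nonempty Y with _ | ⟨⟨y₀⟩⟩
  · exact .of_isEmpty
  · refine .of_bound hf.aestronglyMeasurable (|f y₀| + C) (ae_of_all _ fun x => ?_)
    rw [Real.norm_eq_abs]
    linarith [abs_sub_abs_le_abs_sub (f x) (f y₀), hC x y₀]

section VariationalDistance

variable {X : Type*} [MeasurableSpace X] {P Q : Measure X}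
  [IsProbabilityMeasure P] [IsProbabilityMeasure Q]

lemma abs_measureReal_sub_le_dV {B : Set X} (hB : MeasurableSet B) :
    |P.real B - Q.real B| ≤ dV P Q := by
  refine le_ciSup (f := fun B : {s : Set X // MeasurableSet s} =>
    |(P B.1).toReal - (Q B.1).toReal|) ⟨1, ?_⟩ ⟨B, hB⟩
  rintro _ ⟨B, rfl⟩
  exact abs_sub_le_of_nonneg_of_le measureReal_nonneg measureReal_le_one
    measureReal_nonneg measureReal_le_one

lemma abs_integral_sub_integral_le_mul_dV_of_nonneg_of_le {f : X → ℝ} {K : ℝ}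
    (hf : Measurable f) (hf₀ : ∀ x, 0 ≤ f x) (hfK : ∀ x, f x ≤ K) :
    |∫ x, f x ∂P - ∫ x, f x ∂Q| ≤ K * dV P Q := by
  have hK : 0 ≤ K := (hf₀ _).trans (hfK (nonempty_of_isProbabilityMeasure P).some)
  have hlayer (μ : Measure X) [IsProbabilityMeasure μ] :
      ∫ x, f x ∂μ = ∫ t in Ioc 0 K, μ.real {x | t ≤ f x} :=
    (Integrable.of_bound hf.aestronglyMeasurable K (ae_of_all _ fun x => by
      rw [Real.norm_of_nonneg (hf₀ x)]; exact hfK x)).integral_eq_integral_Ioc_meas_le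
      (ae_of_all _ hf₀) (ae_of_all _ hfK)
  have hint (μ : Measure X) [IsProbabilityMeasure μ] :
      IntegrableOn (fun t => μ.real {x | t ≤ f x}) (Ioc 0 K) :=
    have hanti : Antitone (fun t => μ.real {x | t ≤ f x}) := fun s t hst =>
      measureReal_mono fun x hx => hst.trans hx
    (hanti.locallyIntegrable.integrableOn_isCompact isCompact_Icc).mono_set Ioc_subset_Icc_self
  rw [hlayer P, hlayer Q, ← integral_sub (hint P) (hint Q)]
  calc _ = ‖∫ t in Ioc 0 K, (P.real {x | t ≤ f x} - Q.real {x | t ≤ f x})‖ := rfl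
    _ ≤ dV P Q * volume.real (Ioc 0 K) :=
        norm_setIntegral_le_of_norm_le_const measure_Ioc_lt_top fun t _ =>
          abs_measureReal_sub_le_dV (measurableSet_le measurable_const hf)
    _ = K * dV P Q := by rw [Real.volume_real_Ioc_of_le hK, sub_zero, mul_comm]

lemma abs_integral_sub_integral_le_mul_dV {f : X → ℝ} {K : ℝ} (hf : Measurable f)
    (hfK : ∀ x y, |f x - f y| ≤ K) :
    |∫ x, f x ∂P - ∫ x, f x ∂Q| ≤ K * dV P Q := by
  obtain ⟨x₀⟩ := nonempty_of_isProbabilityMeasure P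
  have : Nonempty X := ⟨x₀⟩
  have hbdd : BddBelow (range f) := ⟨f x₀ - K, by
    rintro _ ⟨x, rfl⟩
    linarith [(abs_le.1 (hfK x₀ x)).2]⟩
  set m := ⨅ x, f x
  have hshift := abs_integral_sub_integral_le_mul_dV_of_nonneg_of_le (P := P) (Q := Q)
    (hf.sub_const m) (fun x => sub_nonneg.2 (ciInf_le hbdd x))
    (fun x => sub_le_comm.1 (le_ciInf fun y => by linarith [(abs_le.1 (hfK x y)).2]))
  have hint (μ : Measure X) [IsProbabilityMeasure μ] : Integrable f μ :=
    integrable_of_abs_sub_le hf hfK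
  simpa [integral_sub (hint P) (integrable_const m), integral_sub (hint Q) (integrable_const m)]
    using hshift

end VariationalDistance

section Hamming

variable {X : Type*} {n : ℕ}

lemma ncard_cons_ne_cons_right (x : X) (y y' : Fin n → X) :
    {j | (Fin.cons x y : Fin (n + 1) → X) j ≠ (Fin.cons x y' : Fin (n + 1) → X) j}.ncard =
      {i | y i ≠ y' i}.ncard := by
  have : {j | (Fin.cons x y : Fin (n + 1) → X) j ≠ (Fin.cons x y' : Fin (n + 1) → X) j} =
      Fin.succ '' {i | y i ≠ y' i} := by
    ext j
    cases j using Fin.cases <;> simp [eq_comm, Fin.succ_ne_zero]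
  rw [this, ncard_image_of_injective _ (Fin.succ_injective n)]

lemma ncard_cons_ne_cons_left_le_one (x x' : X) (y : Fin n → X) :
    {j | (Fin.cons x y : Fin (n + 1) → X) j ≠ (Fin.cons x' y : Fin (n + 1) → X) j}.ncard ≤
      1 := by
  refine (ncard_le_ncard (t := {0}) fun j => ?_).trans (ncard_singleton _).le
  cases j using Fin.cases <;> simp

lemma abs_sub_le_mul_card {g : (Fin n → X) → ℝ} {K : ℝ} (hK : 0 ≤ K)
    (hg : ∀ x y, |g x - g y| ≤ K * ({i | x i ≠ y i} : Set (Fin n)).ncard)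
    (x y : Fin n → X) :
    |g x - g y| ≤ K * n := by
  refine (hg x y).trans (mul_le_mul_of_nonneg_left ?_ hK)
  exact_mod_cast (ncard_le_card _).trans (Nat.card_fin n).le

end Hamming

section Product

variable {X : Type*} [MeasurableSpace X] {n : ℕ}

lemma measurable_cons :
    Measurable fun p : X × (Fin n → X) => (Fin.cons p.1 p.2 : Fin (n + 1) → X) := by
  simpa [MeasurableEquiv.piFinSuccAbove_symm_apply, Fin.insertNthEquiv, Fin.insertNth_zero']
    using (MeasurableEquiv.piFinSuccAbove (fun _ => X) 0).symm.measurable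

lemma integral_pi_fin_succ (μ : Measure X) [SigmaFinite μ] {g : (Fin (n + 1) → X) → ℝ}
    (hg : Integrable g (Measure.pi fun _ => μ)) :
    ∫ x, g x ∂Measure.pi (fun _ => μ) =
      ∫ x, ∫ y, g (Fin.cons x y) ∂Measure.pi (fun _ => μ) ∂μ := by
  have e := (measurePreserving_piFinSuccAbove (fun _ : Fin (n + 1) => μ) 0).symm
  rw [← e.integral_comp', integral_prod]
  · simp [MeasurableEquiv.piFinSuccAbove_symm_apply, Fin.insertNthEquiv, Fin.insertNth_zero']
  · exact (e.integrable_comp_emb (MeasurableEquiv.measurableEmbedding _)).2 hg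

end Product

section Step

variable {X : Type*} [MeasurableSpace X] {n : ℕ} {g : (Fin (n + 1) → X) → ℝ} {K : ℝ}

lemma measurable_integral_cons (hg : Measurable g) (ν : Measure (Fin n → X)) [SFinite ν] :
    Measurable fun x => ∫ y, g (Fin.cons x y) ∂ν :=
  (hg.comp measurable_cons).stronglyMeasurable.integral_prod_right'.measurable

lemma integrable_comp_cons (μ : Measure (Fin n → X)) [IsFiniteMeasure μ] (hK : 0 ≤ K)
    (hg : Measurable g)
    (hlip : ∀ x y, |g x - g y| ≤ K * ({i | x i ≠ y i} : Set (Fin (n + 1))).ncard) (x : X) :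
    Integrable (fun y => g (Fin.cons x y)) μ :=
  integrable_of_abs_sub_le (hg.comp (measurable_cons.comp measurable_prodMk_left))
    fun _ _ => abs_sub_le_mul_card hK hlip _ _

lemma abs_integral_cons_sub_integral_cons_le (μ : Measure (Fin n → X)) [IsProbabilityMeasure μ]
    (hK : 0 ≤ K) (hg : Measurable g)
    (hlip : ∀ x y, |g x - g y| ≤ K * ({i | x i ≠ y i} : Set (Fin (n + 1))).ncard) (x x' : X) :
    |∫ y, g (Fin.cons x y) ∂μ - ∫ y, g (Fin.cons x' y) ∂μ| ≤ K := by
  rw [← integral_sub (integrable_comp_cons μ hK hg hlip x)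
    (integrable_comp_cons μ hK hg hlip x')]
  have hpt (y : Fin n → X) : ‖g (Fin.cons x y) - g (Fin.cons x' y)‖ ≤ K :=
    (hlip _ _).trans <| mul_le_of_le_one_right hK <| by
      exact_mod_cast ncard_cons_ne_cons_left_le_one x x' y
  simpa using norm_integral_le_of_norm_le_const (μ := μ) (ae_of_all _ hpt)

variable {P Q : Measure X} [IsProbabilityMeasure P] [IsProbabilityMeasure Q]

lemma abs_integral_pi_succ_sub_le {C : ℝ} (hK : 0 ≤ K) (hg : Measurable g)
    (hlip : ∀ x y, |g x - g y| ≤ K * ({i | x i ≠ y i} : Set (Fin (n + 1))).ncard)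
    (hsec : ∀ x, |∫ y, g (Fin.cons x y) ∂Measure.pi (fun _ => P) -
      ∫ y, g (Fin.cons x y) ∂Measure.pi (fun _ => Q)| ≤ C) :
    |∫ x, g x ∂Measure.pi (fun _ => P) - ∫ x, g x ∂Measure.pi (fun _ => Q)| ≤
      C + K * dV P Q := by
  have hg_int (μ : Measure X) [IsProbabilityMeasure μ] : Integrable g (Measure.pi fun _ => μ) :=
    integrable_of_abs_sub_le hg (abs_sub_le_mul_card hK hlip)
  rw [integral_pi_fin_succ P (hg_int P), integral_pi_fin_succ Q (hg_int Q)]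
  set GP := fun x => ∫ y, g (Fin.cons x y) ∂Measure.pi (fun _ => P)
  set GQ := fun x => ∫ y, g (Fin.cons x y) ∂Measure.pi (fun _ => Q)
  have hGP := abs_integral_cons_sub_integral_cons_le (Measure.pi fun _ => P) hK hg hlip
  have hGQ := abs_integral_cons_sub_integral_cons_le (Measure.pi fun _ => Q) hK hg hlip
  have hintP : Integrable GP P := integrable_of_abs_sub_le (measurable_integral_cons hg _) hGP
  have hintQ : Integrable GQ P := integrable_of_abs_sub_le (measurable_integral_cons hg _) hGQ
  calc |∫ x, GP x ∂P - ∫ x, GQ x ∂Q|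
      = |∫ x, (GP x - GQ x) ∂P + (∫ x, GQ x ∂P - ∫ x, GQ x ∂Q)| := by
        rw [integral_sub hintP hintQ, sub_add_sub_cancel]
    _ ≤ |∫ x, (GP x - GQ x) ∂P| + |∫ x, GQ x ∂P - ∫ x, GQ x ∂Q| := abs_add_le _ _
    _ ≤ C + K * dV P Q := by
        gcongr
        · simpa using norm_integral_le_of_norm_le_const (μ := P)
            (ae_of_all _ fun x => (Real.norm_eq_abs _).trans_le (hsec x))
        · exact abs_integral_sub_integral_le_mul_dV (measurable_integral_cons hg _) hGQ

end Step

theorem stmt2_general {X : Type*} [MeasurableSpace X] (P Q : Measure X)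
    [IsProbabilityMeasure P] [IsProbabilityMeasure Q]
    (n : ℕ) (K : ℝ) (hK : 0 < K)
    (g : (Fin n → X) → ℝ) (hgm : Measurable g)
    (hlip : ∀ x y : Fin n → X,
      |g x - g y| ≤ K * (({i | x i ≠ y i} : Set (Fin n)).ncard : ℝ)) :
    |(∫ x, g x ∂(Measure.pi fun _ : Fin n => P)) -
        ∫ x, g x ∂(Measure.pi fun _ : Fin n => Q)|
      ≤ n * K * dV P Q := by
  induction n with
  | zero => rw [Measure.pi_of_empty, Measure.pi_of_empty]; simp
  | succ n ih =>
    calc _ ≤ n * K * dV P Q + K * dV P Q :=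
          abs_integral_pi_succ_sub_le hK.le hgm hlip fun x =>
            ih _ (hgm.comp (measurable_cons.comp measurable_prodMk_left)) fun y y' => by
              simpa only [ncard_cons_ne_cons_right] using hlip (Fin.cons x y) (Fin.cons x y')
      _ = (n + 1 : ℕ) * K * dV P Q := by push_cast; ring

/-- If `g : 𝒳^n → ℝ` is bounded, measurable, and satisfies
`|g(x^n) - g(y^n)| ≤ K · #{i : x_i ≠ y_i}`, then
`|∫ g dP^{⊗n} - ∫ g dQ^{⊗n}| ≤ n K · d_V(P, Q)`. -/
theorem stmt2 {X : Type*} [MeasurableSpace X] (P Q : Measure X)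
    [IsProbabilityMeasure P] [IsProbabilityMeasure Q]
    (n : ℕ) (hn : 1 ≤ n) (K : ℝ) (hK : 0 < K)
    (g : (Fin n → X) → ℝ) (hgm : Measurable g)
    (hgb : ∃ M : ℝ, ∀ x, |g x| ≤ M)
    (hlip : ∀ x y : Fin n → X,
      |g x - g y| ≤ K * (({i | x i ≠ y i} : Set (Fin n)).ncard : ℝ)) :
    |(∫ x, g x ∂(Measure.pi fun _ : Fin n => P)) -
        ∫ x, g x ∂(Measure.pi fun _ : Fin n => Q)|
      ≤ n * K * dV P Q :=
  stmt2_general P Q n K hK g hgm hlip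
end

section
/- Let 𝒳 be a measurable space, 𝒳̂ a nonempty set, K > 0, and ρ : 𝒳 × 𝒳̂ → [0, K] a function such that ρ(·, x̂) is measurable for every x̂ ∈ 𝒳̂. Fix n ≥ 1 and a finite nonempty codebook 𝒞 ⊆ 𝒳̂^n. Then for any two probability measures P, Q on 𝒳, |D(P, 𝒞) − D(Q, 𝒞)| ≤ K · d_V(P, Q). -/
open MeasureTheory


open MeasureTheory

section Aux
variable {X : Type*} [MeasurableSpace X]

lemma dV_symm (P Q : Measure X) : dV P Q = dV Q P := by
  unfold dV
  exact iSup_congr fun B => abs_sub_comm _ _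

lemma dV_bddAbove (P Q : Measure X) [IsProbabilityMeasure P] [IsProbabilityMeasure Q] :
    BddAbove (Set.range fun B : {s : Set X // MeasurableSet s} =>
      |(P B.1).toReal - (Q B.1).toReal|) := by
  refine ⟨2, ?_⟩
  rintro _ ⟨B, rfl⟩
  have h1 : (P B.1).toReal ≤ 1 := by
    simpa using ENNReal.toReal_mono (by simp) (prob_le_one (μ := P) (s := B.1))
  have h2 : (Q B.1).toReal ≤ 1 := by
    simpa using ENNReal.toReal_mono (by simp) (prob_le_one (μ := Q) (s := B.1))
  have h3 : (0:ℝ) ≤ (P B.1).toReal := ENNReal.toReal_nonneg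
  have h4 : (0:ℝ) ≤ (Q B.1).toReal := ENNReal.toReal_nonneg
  rw [abs_le]; constructor <;> linarith

lemma le_dV (P Q : Measure X) [IsProbabilityMeasure P] [IsProbabilityMeasure Q]
    {B : Set X} (hB : MeasurableSet B) :
    |(P B).toReal - (Q B).toReal| ≤ dV P Q :=
  le_ciSup (dV_bddAbove P Q) (⟨B, hB⟩ : {s : Set X // MeasurableSet s})

lemma dV_nonneg (P Q : Measure X) [IsProbabilityMeasure P] [IsProbabilityMeasure Q] :
    0 ≤ dV P Q :=
  le_trans (by simp) (le_dV P Q MeasurableSet.empty)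

lemma integrable_of_bdd {g : X → ℝ} (hg : Measurable g) {c : ℝ} (hb : ∀ x, |g x| ≤ c)
    (μ : Measure X) [IsFiniteMeasure μ] : Integrable g μ :=
  Integrable.mono' (integrable_const c) hg.aestronglyMeasurable
    (Filter.Eventually.of_forall fun x => by simpa using hb x)

lemma integral_sub_le_dV₀ (P Q : Measure X) [IsProbabilityMeasure P] [IsProbabilityMeasure Q]
    {g : X → ℝ} (hg : Measurable g) {K : ℝ} (hK : 0 ≤ K)
    (h1 : ∀ x, 0 ≤ g x) (h2 : ∀ x, g x ≤ K) :
    ∫ x, g x ∂P - ∫ x, g x ∂Q ≤ K * dV P Q := by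
  obtain ⟨S, hS, hS1, hS2⟩ := hahn_decomposition (μ := P) (ν := Q)
  have hbdd : ∀ x, |g x| ≤ K := fun x => abs_le.2 ⟨by linarith [h1 x], h2 x⟩
  have hint : ∀ (μ : Measure X) [IsFiniteMeasure μ], Integrable g μ :=
    fun μ _ => integrable_of_bdd hg hbdd μ
  have hQPS : Q.restrict S ≤ P.restrict S := by
    refine Measure.le_iff.2 fun t ht => ?_
    rw [Measure.restrict_apply ht, Measure.restrict_apply ht]
    exact hS1 _ (ht.inter hS) Set.inter_subset_right
  have hPQS : P.restrict Sᶜ ≤ Q.restrict Sᶜ := by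
    refine Measure.le_iff.2 fun t ht => ?_
    rw [Measure.restrict_apply ht, Measure.restrict_apply ht]
    exact hS2 _ (ht.inter hS.compl) Set.inter_subset_right
  have hsplitP : ∫ x in S, g x ∂P + ∫ x in Sᶜ, g x ∂P = ∫ x, g x ∂P :=
    integral_add_compl hS (hint P)
  have hsplitQ : ∫ x in S, g x ∂Q + ∫ x in Sᶜ, g x ∂Q = ∫ x, g x ∂Q :=
    integral_add_compl hS (hint Q)
  have hcompl : ∫ x in Sᶜ, g x ∂P ≤ ∫ x in Sᶜ, g x ∂Q :=
    integral_mono_measure hPQS (Filter.Eventually.of_forall h1) ((hint Q).restrict (s := Sᶜ))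
  have hKg : ∫ x in S, (K - g x) ∂Q ≤ ∫ x in S, (K - g x) ∂P :=
    integral_mono_measure hQPS (Filter.Eventually.of_forall fun x => by dsimp; linarith [h2 x])
      (((integrable_const K).sub (hint P)).restrict (s := S))
  have hsubP : ∫ x in S, (K - g x) ∂P = (P S).toReal * K - ∫ x in S, g x ∂P := by
    rw [integral_sub (integrable_const K) ((hint P).restrict (s := S)), setIntegral_const]
    simp [smul_eq_mul, Measure.real]
  have hsubQ : ∫ x in S, (K - g x) ∂Q = (Q S).toReal * K - ∫ x in S, g x ∂Q := by
    rw [integral_sub (integrable_const K) ((hint Q).restrict (s := S)), setIntegral_const]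
    simp [smul_eq_mul, Measure.real]
  have hdv : (P S).toReal - (Q S).toReal ≤ dV P Q :=
    le_trans (le_abs_self _) (le_dV P Q hS)
  have : ∫ x in S, g x ∂P - ∫ x in S, g x ∂Q ≤ K * ((P S).toReal - (Q S).toReal) := by
    rw [hsubP, hsubQ] at hKg; linarith
  nlinarith [mul_le_mul_of_nonneg_left hdv hK]

lemma abs_integral_sub_le_dV (P Q : Measure X) [IsProbabilityMeasure P] [IsProbabilityMeasure Q]
    {g : X → ℝ} (hg : Measurable g) {K : ℝ} (hK : 0 ≤ K)
    (h0 : ∀ x, 0 ≤ g x) (hosc : ∀ x y, g x ≤ g y + K) :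
    |∫ x, g x ∂P - ∫ x, g x ∂Q| ≤ K * dV P Q := by
  have hne : Nonempty X := P.nonempty_of_neZero
  set a : ℝ := ⨅ x, g x with ha
  have hbdd : BddBelow (Set.range g) := ⟨0, by rintro _ ⟨x, rfl⟩; exact h0 x⟩
  have h1 : ∀ x, a ≤ g x := fun x => ciInf_le hbdd x
  have h2 : ∀ x, g x ≤ a + K := fun x => by
    have : g x - K ≤ a := le_ciInf fun y => by linarith [hosc x y]
    linarith
  have key : ∀ (R T : Measure X) [IsProbabilityMeasure R] [IsProbabilityMeasure T],
      ∫ x, g x ∂ R - ∫ x, g x ∂ T ≤ K * dV R T := by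
    intro R T _ _
    have h0' : ∀ x, 0 ≤ g x - a := fun x => by linarith [h1 x]
    have h2' : ∀ x, g x - a ≤ K := fun x => by linarith [h2 x]
    have := integral_sub_le_dV₀ (g := fun x => g x - a) R T (hg.sub measurable_const) hK h0' h2'
    have hR : ∫ x, (g x - a) ∂ R = ∫ x, g x ∂ R - a := by
      rw [integral_sub (integrable_of_bdd (c := |a| + K) hg (fun x => abs_le.2
        ⟨by linarith [h1 x, neg_abs_le a], by linarith [h2 x, le_abs_self a]⟩) R)
        (integrable_const a)]
      simp
    have hT : ∫ x, (g x - a) ∂T = ∫ x, g x ∂T - a := by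
      rw [integral_sub (integrable_of_bdd (c := |a| + K) hg (fun x => abs_le.2
        ⟨by linarith [h1 x, neg_abs_le a], by linarith [h2 x, le_abs_self a]⟩) T)
        (integrable_const a)]
      simp
    rw [hR, hT] at this; linarith
  rw [abs_sub_le_iff]
  exact ⟨key P Q, by rw [dV_symm]; exact key Q P⟩

end Aux

section Step
variable {X : Type*} [MeasurableSpace X] {n : ℕ}

lemma step_dV (m m' : Fin n → Measure X)
    [hm : ∀ j, IsProbabilityMeasure (m j)] [hm' : ∀ j, IsProbabilityMeasure (m' j)]
    (i : Fin n) (hmm : ∀ j, j ≠ i → m j = m' j)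
    {f : (Fin n → X) → ℝ} (hf : Measurable f) {K M : ℝ} (hK : 0 ≤ K) (hM0 : 0 ≤ M)
    (h0 : ∀ x, 0 ≤ f x) (hMb : ∀ x, f x ≤ M)
    (hosc : ∀ x t, f (Function.update x i t) ≤ f x + K) :
    |∫ x, f x ∂Measure.pi m - ∫ x, f x ∂Measure.pi m'| ≤ K * dV (m i) (m' i) := by
  classical
  set p : Fin n → Prop := fun j => j = i with hp
  have hpi : p i := cast (congrFun hp i).symm rfl
  have hnp : ∀ j, j ≠ i → ¬ p j := fun j hj hpj => hj (cast (congrFun hp j) hpj)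
  have hpn : ∀ j, ¬ p j → j ≠ i := fun j hpj hji => hpj (cast (congrFun hp j).symm hji)
  clear_value p
  letI hu : Unique {j : Fin n // p j} :=
    ⟨⟨⟨i, hpi⟩⟩, fun a => Subtype.ext (show (a : Fin n) = i from cast (congrFun hp a.1) a.2)⟩
  set e := MeasurableEquiv.piEquivPiSubtypeProd (fun _ : Fin n => X) p with he
  have hesymm : ∀ (t : X) (y : {j // ¬ p j} → X) (j : Fin n),
      e.symm (fun _ => t, y) j = if h : p j then t else y ⟨j, h⟩ := by
    intro t y j
    simp [he, MeasurableEquiv.piEquivPiSubtypeProd, Equiv.piEquivPiSubtypeProd]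
  have key : ∀ (μ : Fin n → Measure X), (∀ j, IsProbabilityMeasure (μ j)) →
      ∫ x, f x ∂Measure.pi μ =
        ∫ y : {j // ¬ p j} → X, ∫ t : X, f (e.symm (fun _ => t, y)) ∂(μ i)
          ∂(Measure.pi fun j : {j // ¬ p j} => μ j.1) := by
    intro μ hμ
    haveI := hμ
    have h1 := (measurePreserving_piEquivPiSubtypeProd μ p).integral_comp'
        (fun z => f ((MeasurableEquiv.piEquivPiSubtypeProd (fun _ : Fin n => X) p).symm z))
    rw [← he] at h1
    simp only [MeasurableEquiv.symm_apply_apply] at h1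
    have hint : Integrable (fun z => f (e.symm z))
        ((Measure.pi fun j : {j // p j} => μ j.1).prod
          (Measure.pi fun j : {j // ¬ p j} => μ j.1)) :=
      integrable_of_bdd (c := M) (hf.comp e.symm.measurable)
        (fun z => by
          show |f (e.symm z)| ≤ M
          rw [abs_le]; exact ⟨by linarith [h0 (e.symm z)], hMb _⟩) _
    rw [h1, integral_prod _ hint, integral_integral_swap hint]
    refine integral_congr_ae (Filter.Eventually.of_forall fun y => ?_)
    dsimp only
    have h3 := (measurePreserving_piUnique (fun j : Subtype p => μ j.1)).integral_comp'
        (fun t => f (e.symm (fun _ => t, y)))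
    have hdef : ((default : Subtype p) : Fin n) = i := rfl
    rw [hdef] at h3
    refine Eq.trans ?_ h3
    have hpoint : ∀ a : Subtype p → X,
        f (e.symm (a, y)) = f (e.symm (fun _ => (MeasurableEquiv.piUnique
          (fun _ : Subtype p => X)) a, y)) := by
      intro a
      have : (fun _ : Subtype p => (MeasurableEquiv.piUnique (fun _ : Subtype p => X)) a) = a :=
        funext fun j => (congrArg a (Unique.eq_default j)).symm
      rw [this]
    refine Eq.trans (integral_congr_ae (Filter.Eventually.of_forall fun a => hpoint a)) ?_
    congr!
  have hrest : (fun j : {j : Fin n // ¬ p j} => m' j.1) = fun j => m j.1 :=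
    funext fun j => (hmm j.1 (hpn j.1 j.2)).symm
  rw [key m hm, key m' hm', hrest]
  set ν₂ := Measure.pi fun j : {j : Fin n // ¬ p j} => m j.1 with hν₂
  haveI : ∀ j : {j : Fin n // ¬ p j}, IsProbabilityMeasure (m j.1) := fun j => hm j.1
  have hsm : ∀ (t : X) (y : {j : Fin n // ¬ p j} → X), 0 ≤ f (e.symm (fun _ => t, y)) :=
    fun t y => h0 _
  have hHm : Measurable (fun z : ({j : Fin n // ¬ p j} → X) × X =>
      f (e.symm (fun _ => z.2, z.1))) := by
    apply hf.comp
    apply e.symm.measurable.comp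
    exact Measurable.prod (measurable_pi_lambda _ fun _ => measurable_snd) measurable_fst
  have hGint : ∀ (R : Measure X) [IsProbabilityMeasure R],
      Integrable (fun y => ∫ t, f (e.symm (fun _ => t, y)) ∂ R) ν₂ := by
    intro R _
    have : Integrable (fun z : ({j : Fin n // ¬ p j} → X) × X =>
        f (e.symm (fun _ => z.2, z.1))) (ν₂.prod R) :=
      integrable_of_bdd (c := M) hHm (fun z => by
        rw [abs_le]; exact ⟨by linarith [hsm z.2 z.1], hMb _⟩) _
    exact this.integral_prod_left
  rw [← integral_sub (hGint (m i)) (hGint (m' i))]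
  have hbound : ∀ᵐ y ∂ν₂, ‖(∫ t, f (e.symm (fun _ => t, y)) ∂(m i)) -
      ∫ t, f (e.symm (fun _ => t, y)) ∂(m' i)‖ ≤ K * dV (m i) (m' i) := by
    refine Filter.Eventually.of_forall fun y => ?_
    rw [Real.norm_eq_abs]
    refine abs_integral_sub_le_dV (m i) (m' i) ?_ hK (fun t => hsm t y) ?_
    · exact hf.comp (e.symm.measurable.comp
        (Measurable.prod (measurable_pi_lambda _ fun _ => measurable_id) measurable_const))
    · intro t t'
      have hx : e.symm (fun _ => t, y) = Function.update (e.symm (fun _ => t', y)) i t := by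
        funext j
        rcases eq_or_ne j i with rfl | hj
        · rw [Function.update_self, hesymm]
          exact dif_pos hpi
        · have hpj : ¬ p j := hnp j hj
          rw [Function.update_of_ne hj, hesymm, hesymm, dif_neg hpj, dif_neg hpj]
      rw [hx]
      exact hosc _ t
  have := norm_integral_le_of_norm_le_const (μ := ν₂) hbound
  simpa [Real.norm_eq_abs, measure_univ] using this

end Step

lemma measurable_finsetInf' {X : Type*} [MeasurableSpace X] {β : Type*} (s : Finset β)
    (hs : s.Nonempty) (g : β → X → ℝ) (hg : ∀ b, Measurable (g b)) :
    Measurable fun x => s.inf' hs fun b => g b x := by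
  induction hs using Finset.Nonempty.cons_induction with
  | singleton a => simpa using hg a
  | cons a s ha hs ih =>
      have : (fun x => (Finset.cons a s ha).inf' (Finset.cons_nonempty ha) fun b => g b x)
          = fun x => min (g a x) (s.inf' hs fun b => g b x) := by
        funext x
        rw [Finset.inf'_cons]
      rw [this]
      exact (hg a).min ih

/-- The per-letter expected distortion of the minimum-distortion encoder with
codebook `C ⊆ 𝒳̂^n` on the i.i.d. source with marginal `P`:
`D(P, C) = (1/n) ∫ min_{c ∈ C} Σ_i ρ(x_i, c_i) dP^{⊗n}(x^n)`. -/
noncomputable def Dcode {X Xh : Type*} [MeasurableSpace X] (ρ : X → Xh → ℝ) (n : ℕ)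
    (P : Measure X) (C : Finset (Fin n → Xh)) : ℝ :=
  (1 / n : ℝ) *
    ∫ x, sInf ((fun c => ∑ i, ρ (x i) (c i)) '' (C : Set (Fin n → Xh)))
      ∂(Measure.pi fun _ : Fin n => P)

/-- For a distortion measure `ρ : 𝒳 × 𝒳̂ → [0, K]` (measurable in its first argument),
a fixed finite nonempty codebook `C ⊆ 𝒳̂^n`, and any two probability measures `P, Q`,
`|D(P, C) - D(Q, C)| ≤ K · d_V(P, Q)`. -/
theorem stmt3 {X Xh : Type*} [MeasurableSpace X] [Nonempty Xh]
    (K : ℝ) (hK : 0 < K) (ρ : X → Xh → ℝ)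
    (hρm : ∀ xh : Xh, Measurable fun x => ρ x xh)
    (hρ0 : ∀ x xh, 0 ≤ ρ x xh) (hρK : ∀ x xh, ρ x xh ≤ K)
    (n : ℕ) (hn : 1 ≤ n)
    (C : Finset (Fin n → Xh)) (hC : C.Nonempty)
    (P Q : Measure X) [IsProbabilityMeasure P] [IsProbabilityMeasure Q] :
    |Dcode ρ n P C - Dcode ρ n Q C| ≤ K * dV P Q := by
  classical
  set f : (Fin n → X) → ℝ := fun x => C.inf' hC fun c => ∑ i, ρ (x i) (c i) with hf_def
  have hf_eq : ∀ x : Fin n → X,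
      sInf ((fun c => ∑ i, ρ (x i) (c i)) '' (C : Set (Fin n → Xh))) = f x :=
    fun x => (Finset.inf'_eq_csInf_image C hC _).symm
  have hfm : Measurable f :=
    measurable_finsetInf' C hC _ fun c =>
      Finset.measurable_sum _ fun j _ => (hρm (c j)).comp (measurable_pi_apply j)
  have h0 : ∀ x, 0 ≤ f x := fun x =>
    Finset.le_inf' hC _ fun c _ => Finset.sum_nonneg fun j _ => hρ0 _ _
  have hMb : ∀ x, f x ≤ n * K := by
    intro x
    obtain ⟨c₀, hc₀⟩ := hC
    refine le_trans (Finset.inf'_le _ hc₀) ?_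
    calc ∑ j, ρ (x j) (c₀ j) ≤ ∑ _j : Fin n, K :=
          Finset.sum_le_sum fun j _ => hρK _ _
      _ = n * K := by simp [Finset.sum_const, mul_comm]
  have hM0 : (0:ℝ) ≤ n * K := mul_nonneg (Nat.cast_nonneg n) hK.le
  have hosc : ∀ (i : Fin n) (x : Fin n → X) (t : X),
      f (Function.update x i t) ≤ f x + K := by
    intro i x t
    obtain ⟨c₀, hc₀, hcEq⟩ := Finset.exists_mem_eq_inf' hC fun c => ∑ j, ρ (x j) (c j)
    have h1 : f (Function.update x i t) ≤ ∑ j, ρ (Function.update x i t j) (c₀ j) :=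
      Finset.inf'_le _ hc₀
    have hupd : (fun j => ρ (Function.update x i t j) (c₀ j)) =
        Function.update (fun j => ρ (x j) (c₀ j)) i (ρ t (c₀ i)) := by
      funext j
      rcases eq_or_ne j i with rfl | hj
      · simp
      · simp [Function.update_of_ne hj]
    have h2 : ∑ j, ρ (Function.update x i t j) (c₀ j) =
        ρ t (c₀ i) + ∑ j ∈ Finset.univ \ {i}, ρ (x j) (c₀ j) := by
      rw [hupd, Finset.sum_update_of_mem (Finset.mem_univ i)]
    have h3 : ∑ j, ρ (x j) (c₀ j) =
        ρ (x i) (c₀ i) + ∑ j ∈ Finset.univ \ {i}, ρ (x j) (c₀ j) :=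
      Finset.sum_eq_add_sum_sdiff_singleton_of_mem (Finset.mem_univ i) _
    have h4 : f x = ∑ j, ρ (x j) (c₀ j) := hcEq
    have h5 := hρK t (c₀ i)
    have h6 := hρ0 (x i) (c₀ i)
    rw [h4]
    rw [h2] at h1
    linarith
  have hdv0 : (0:ℝ) ≤ K * dV P Q := mul_nonneg hK.le (dV_nonneg P Q)
  set F : ℕ → ℝ :=
    fun k => ∫ x, f x ∂Measure.pi (fun j : Fin n => if (j : ℕ) < k then P else Q) with hF
  have hinst : ∀ (k : ℕ) (j : Fin n), IsProbabilityMeasure (if (j : ℕ) < k then P else Q) :=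
    fun k j => by split <;> infer_instance
  have hstep : ∀ k, |F (k + 1) - F k| ≤ K * dV P Q := by
    intro k
    by_cases hkn : k < n
    · have i : Fin n := ⟨k, hkn⟩
      haveI := hinst (k + 1)
      haveI := hinst k
      have hmm : ∀ j : Fin n, j ≠ (⟨k, hkn⟩ : Fin n) →
          (if (j : ℕ) < k + 1 then P else Q) = (if (j : ℕ) < k then P else Q) := by
        intro j hj
        have hne : (j : ℕ) ≠ k := fun h => hj (Fin.ext h)
        by_cases h2 : (j : ℕ) < k
        · rw [if_pos (by omega), if_pos h2]
        · rw [if_neg (by omega), if_neg h2]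
      have h := step_dV (fun j : Fin n => if (j : ℕ) < k + 1 then P else Q)
        (fun j : Fin n => if (j : ℕ) < k then P else Q) (⟨k, hkn⟩ : Fin n) hmm
        hfm hK.le hM0 h0 hMb (hosc _)
      have e1 : (if ((⟨k, hkn⟩ : Fin n) : ℕ) < k + 1 then P else Q) = P :=
        if_pos (Nat.lt_succ_self k)
      have e2 : (if ((⟨k, hkn⟩ : Fin n) : ℕ) < k then P else Q) = Q :=
        if_neg (lt_irrefl k)
      dsimp only at h
      rw [e1, e2] at h
      simp only [hF]
      exact h
    · have heq : (fun j : Fin n => if (j : ℕ) < k + 1 then P else Q) =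
          (fun j : Fin n => if (j : ℕ) < k then P else Q) := by
        funext j
        have := j.isLt
        rw [if_pos (by omega), if_pos (by omega)]
      simp only [hF, heq]
      simpa using hdv0
  have htele : ∀ k : ℕ, |F k - F 0| ≤ k * (K * dV P Q) := by
    intro k
    induction k with
    | zero => simp
    | succ k ih =>
        calc |F (k + 1) - F 0| ≤ |F (k + 1) - F k| + |F k - F 0| := abs_sub_le _ _ _
          _ ≤ K * dV P Q + k * (K * dV P Q) := add_le_add (hstep k) ih
          _ = (k + 1 : ℕ) * (K * dV P Q) := by push_cast; ring
  have hfamP : (fun j : Fin n => if (j : ℕ) < n then P else Q) = fun _ => P :=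
    funext fun j => if_pos j.isLt
  have hfamQ : (fun j : Fin n => if (j : ℕ) < 0 then P else Q) = fun _ => Q :=
    funext fun j => if_neg (by omega)
  have hFn : F n = ∫ x, f x ∂Measure.pi (fun _ : Fin n => P) := by
    rw [hF]; simp only []; rw [hfamP]
  have hF0 : F 0 = ∫ x, f x ∂Measure.pi (fun _ : Fin n => Q) := by
    rw [hF]; simp only []; rw [hfamQ]
  have hbound : |(∫ x, f x ∂Measure.pi (fun _ : Fin n => P)) -
      ∫ x, f x ∂Measure.pi (fun _ : Fin n => Q)| ≤ n * (K * dV P Q) := by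
    rw [← hFn, ← hF0]; exact htele n
  unfold Dcode
  simp only [hf_eq]
  rw [← mul_sub, abs_mul, abs_of_nonneg (by positivity : (0:ℝ) ≤ 1 / (n:ℝ))]
  have hn0 : (n:ℝ) ≠ 0 := by positivity
  calc (1 / (n:ℝ)) * |(∫ x, f x ∂Measure.pi (fun _ : Fin n => P)) -
        ∫ x, f x ∂Measure.pi (fun _ : Fin n => Q)|
      ≤ (1 / (n:ℝ)) * (n * (K * dV P Q)) :=
        mul_le_mul_of_nonneg_left hbound (by positivity)
    _ = K * dV P Q := by field_simp
end

section
/- Let X be a set, k ≥ 1, and let F be a vector space of real-valued functions on X of dimension at most k. Then the class of sets 𝒜 := { {x ∈ X : f(x) > 0} : f ∈ F } has VC dimension at most k; that is, 𝒜 shatters no subset of X of cardinality k + 1. -/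
/-- A class `𝒜` of subsets of `X` shatters a finite set `F ⊆ X` if for every
`S ⊆ F` there exists `A ∈ 𝒜` with `S = F ∩ A`. -/
def Shatters {X : Type*} (𝒜 : Set (Set X)) (F : Finset X) : Prop :=
  ∀ S : Finset X, S ⊆ F → ∃ A ∈ 𝒜, (F : Set X) ∩ A = (S : Set X)

/-- Auxiliary lemma: if `γ` is a weighting on `S` with a strictly positive value
somewhere, and every `f ∈ F` satisfies `∑_{x ∈ S} γ x * f x = 0`, then the class of
positivity sets of `F` cannot shatter `S` (the set `{x ∈ S : γ x > 0}` cannot be cut out). -/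
lemma aux_stmt7 {X : Type*} (F : Submodule ℝ (X → ℝ)) (S : Finset X)
    (γ : ↥S → ℝ) (x0 : ↥S) (hx0 : 0 < γ x0)
    (hsum : ∀ f ∈ F, ∑ x : ↥S, γ x * f x = 0)
    (hSh : Shatters {A : Set X | ∃ f ∈ F, A = {x | f x > 0}} S) : False := by
  classical
  set T : Finset X :=
    (Finset.univ.filter fun x : ↥S => 0 < γ x).map
      ⟨Subtype.val, Subtype.val_injective⟩ with hT
  have hmemT : ∀ x : ↥S, (x : X) ∈ T ↔ 0 < γ x := by
    intro x
    rw [hT, Finset.mem_map]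
    constructor
    · rintro ⟨y, hy, h⟩
      rw [Finset.mem_filter] at hy
      have : y = x := Subtype.ext h
      rw [← this]; exact hy.2
    · intro h
      exact ⟨x, Finset.mem_filter.mpr ⟨Finset.mem_univ _, h⟩, rfl⟩
  have hTS : T ⊆ S := by
    intro x hx
    rw [hT, Finset.mem_map] at hx
    obtain ⟨y, _, rfl⟩ := hx
    exact y.2
  obtain ⟨A, hA, hST⟩ := hSh T hTS
  obtain ⟨f, hfF, rfl⟩ := hA
  have hpos : ∀ x : ↥S, 0 < γ x → 0 < f x := by
    intro x hx
    have hxT : (x : X) ∈ T := (hmemT x).mpr hx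
    have : (x : X) ∈ (S : Set X) ∩ {x | f x > 0} := by rw [hST]; exact_mod_cast hxT
    exact this.2
  have hneg : ∀ x : ↥S, ¬ (0 < γ x) → f x ≤ 0 := by
    intro x hx
    by_contra h
    push_neg at h
    have : (x : X) ∈ (S : Set X) ∩ {x | f x > 0} := ⟨x.2, h⟩
    rw [hST] at this
    exact hx ((hmemT x).mp (by exact_mod_cast this))
  have h0 : (0:ℝ) < ∑ x : ↥S, γ x * f x := by
    apply Finset.sum_pos'
    · intro x _
      by_cases hx : 0 < γ x
      · exact le_of_lt (mul_pos hx (hpos x hx))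
      · nlinarith [le_of_not_gt hx, hneg x hx]
    · exact ⟨x0, Finset.mem_univ _, mul_pos hx0 (hpos x0 hx0)⟩
  rw [hsum f hfF] at h0
  exact lt_irrefl _ h0

/-- **VC dimension of positivity sets of a finite-dimensional function space**
(Lemma 4.2 of Devroye–Lugosi): if `F` is a vector space of real-valued functions on `X`
of dimension at most `k`, then the class `{ {x : f(x) > 0} : f ∈ F }` has VC dimension
at most `k`, i.e. it shatters no subset of `X` of cardinality `k + 1`. -/
theorem stmt7 {X : Type*} (k : ℕ) (hk : 1 ≤ k)
    (F : Submodule ℝ (X → ℝ)) [FiniteDimensional ℝ F]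
    (hF : Module.finrank ℝ F ≤ k)
    (S : Finset X) (hS : S.card = k + 1) :
    ¬ Shatters {A : Set X | ∃ f ∈ F, A = {x | f x > 0}} S := by
  classical
  intro hSh
  set e : ↥S → Module.Dual ℝ ↥F :=
    fun x => (LinearMap.proj (x : X)).comp F.subtype with he
  have hdep : ¬ LinearIndependent ℝ e := by
    intro h
    have h1 := h.fintype_card_le_finrank
    rw [Subspace.dual_finrank_eq, Fintype.card_coe, hS] at h1
    omega
  obtain ⟨g, hg0, x0, hx0⟩ := Fintype.not_linearIndependent_iff.mp hdep
  have key : ∀ f ∈ F, ∑ x : ↥S, g x * f x = 0 := by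
    intro f hf
    have := congrArg (fun φ => φ (⟨f, hf⟩ : ↥F)) hg0
    simpa [he, mul_comm] using this
  rcases hx0.lt_or_gt with hneg | hpos
  · refine aux_stmt7 F S (-g) x0 (by simpa using hneg) (fun f hf => ?_) hSh
    have := key f hf
    simp only [Pi.neg_apply, neg_mul]
    rw [Finset.sum_neg_distrib]
    simpa using this
  · exact aux_stmt7 F S g x0 hpos key hSh
end

section
/- Let p_1, …, p_k be probability densities on a measurable set 𝒳 ⊆ ℝ^d, let Θ be the simplex of probability vectors in ℝ^k, and for θ ∈ Θ let p_θ(x) = Σ_{i=1}^k θ_i p_i(x). Then the Yatracos class 𝒜_Θ = { {x ∈ 𝒳 : p_θ(x) > p_η(x)} : θ, η ∈ Θ, θ ≠ η } has VC dimension at most k; that is, 𝒜_Θ shatters no subset of 𝒳 of cardinality k + 1. -/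
open MeasureTheory

/-- **The Yatracos class of a mixture family has VC dimension at most `k`.**
Let `p_1, …, p_k` be probability densities on a measurable `𝒳 ⊆ ℝ^d`, `Θ` the
probability simplex, and `p_θ = Σ_i θ_i p_i`.  Then the Yatracos class
`𝒜_Θ = { {x ∈ 𝒳 : p_θ(x) > p_η(x)} : θ ≠ η }` shatters no subset of `𝒳` of
cardinality `k + 1`. -/
theorem stmt8 {d k : ℕ} (hk : 1 ≤ k)
    (𝒳 : Set (EuclideanSpace ℝ (Fin d))) (h𝒳 : MeasurableSet 𝒳)
    (p : Fin k → EuclideanSpace ℝ (Fin d) → ℝ)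
    (hpm : ∀ i, Measurable (p i)) (hp0 : ∀ i x, 0 ≤ p i x)
    (hp1 : ∀ i, ∫ x in 𝒳, p i x = 1)
    (Θ : Set (Fin k → ℝ))
    (hΘ : Θ = {θ | (∀ i, 0 ≤ θ i) ∧ ∑ i, θ i = 1})
    (𝒜 : Set (Set (EuclideanSpace ℝ (Fin d))))
    (h𝒜 : 𝒜 = {s | ∃ θ ∈ Θ, ∃ η ∈ Θ, θ ≠ η ∧
      s = {x ∈ 𝒳 | ∑ i, θ i * p i x > ∑ i, η i * p i x}})
    (S : Finset (EuclideanSpace ℝ (Fin d))) (hS𝒳 : ↑S ⊆ 𝒳)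
    (hScard : S.card = k + 1) :
    ¬ Shatters 𝒜 S := by

  classical
  intro hsh
  -- the evaluation vectors of the densities on `S`
  have hcard : Fintype.card {x // x ∈ S} = k + 1 := by
    simp [hScard]
  have hnli : ¬ LinearIndependent ℝ (fun x : {x // x ∈ S} => fun i => p i (x : _)) := by
    intro h
    have hle := h.fintype_card_le_finrank
    rw [Module.finrank_pi, hcard] at hle
    simp at hle
  rw [Fintype.not_linearIndependent_iff] at hnli
  obtain ⟨g0, hg0, x₀0, hx₀0⟩ := hnli
  -- choose the sign so that some coefficient is positive
  obtain ⟨g, hg, x₀, hx₀⟩ :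
      ∃ g : {x // x ∈ S} → ℝ,
        (∑ x, g x • (fun i => p i (x : _))) = 0 ∧ ∃ x₀, 0 < g x₀ := by
    rcases hx₀0.lt_or_gt with h | h
    · refine ⟨fun x => -g0 x, ?_, x₀0, by simpa using neg_pos.mpr h⟩
      have := congrArg Neg.neg hg0
      simpa [neg_smul, ← Finset.sum_neg_distrib] using this
    · exact ⟨g0, hg0, x₀0, h⟩
  -- extend the coefficients to the ambient space
  set G : EuclideanSpace ℝ (Fin d) → ℝ :=
    fun x => if h : x ∈ S then g ⟨x, h⟩ else 0 with hGdef
  have hGsum : ∀ i, ∑ x ∈ S, G x * p i x = 0 := by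
    intro i
    have := congrFun hg i
    simp only [Finset.sum_apply, Pi.smul_apply, smul_eq_mul, Pi.zero_apply] at this
    rw [← Finset.sum_attach S (fun x => G x * p i x)]
    calc ∑ x ∈ S.attach, G (x : _) * p i (x : _)
        = ∑ x ∈ S.attach, g x * p i (x : _) := by
          refine Finset.sum_congr rfl fun x _ => ?_
          simp [hGdef, x.2]
      _ = 0 := this
  -- shattering produces a set realizing the positive coefficients
  obtain ⟨A, hA𝒜, hSA⟩ := hsh (S.filter fun x => 0 < G x) (Finset.filter_subset _ _)
  rw [h𝒜] at hA𝒜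
  obtain ⟨θ, hθ, η, hη, hne, hAeq⟩ := hA𝒜
  set F : EuclideanSpace ℝ (Fin d) → ℝ :=
    fun x => ∑ i, (θ i - η i) * p i x with hFdef
  have hmem : ∀ x ∈ S, (0 < G x ↔ 0 < F x) := by
    intro x hx
    have hxA : x ∈ A ↔ x ∈ (S.filter fun x => 0 < G x) := by
      constructor
      · intro h
        have : x ∈ (S : Set _) ∩ A := ⟨hx, h⟩
        rw [hSA] at this
        exact_mod_cast this
      · intro h
        have : x ∈ ((S.filter fun x => 0 < G x : Finset _) : Set _) := by exact_mod_cast h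
        rw [← hSA] at this
        exact this.2
    have hxF : x ∈ A ↔ 0 < F x := by
      rw [hAeq]
      simp only [Set.mem_setOf_eq]
      constructor
      · intro h
        simp only [hFdef, sub_mul, Finset.sum_sub_distrib]
        linarith [h.2]
      · intro h
        refine ⟨hS𝒳 hx, ?_⟩
        simp only [hFdef, sub_mul, Finset.sum_sub_distrib] at h
        linarith
    rw [Finset.mem_filter] at hxA
    constructor
    · intro h
      exact hxF.mp (hxA.mpr ⟨hx, h⟩)
    · intro h
      exact (hxA.mp (hxF.mpr h)).2
  -- the pairing sum is zero by the linear dependence…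
  have hzero : ∑ x ∈ S, G x * F x = 0 := by
    simp only [hFdef, Finset.mul_sum]
    rw [Finset.sum_comm]
    calc ∑ i, ∑ x ∈ S, G x * ((θ i - η i) * p i x)
        = ∑ i, (θ i - η i) * ∑ x ∈ S, G x * p i x := by
          refine Finset.sum_congr rfl fun i _ => ?_
          rw [Finset.mul_sum]
          refine Finset.sum_congr rfl fun x _ => by ring
      _ = 0 := by simp [hGsum]
  -- …but strictly positive by the shattering property
  have hpos : 0 < ∑ x ∈ S, G x * F x := by
    refine Finset.sum_pos' (fun x hx => ?_) ⟨x₀, x₀.2, ?_⟩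
    · rcases lt_or_ge 0 (G x) with h | h
      · exact le_of_lt (mul_pos h ((hmem x hx).mp h))
      · have hF : F x ≤ 0 := by
          by_contra hc
          push_neg at hc
          exact absurd ((hmem x hx).mpr hc) (not_lt.mpr h)
        nlinarith
    · have hGx₀ : 0 < G (x₀ : _) := by
        simp only [hGdef]
        rw [dif_pos x₀.2]
        exact hx₀
      exact mul_pos hGx₀ ((hmem _ x₀.2).mp hGx₀)
  linarith
end

section
/- Let 𝒳 ⊆ ℝ^d be measurable, p a probability density on 𝒳, h_1, …, h_k : 𝒳 → ℝ, and for θ ∈ Θ ⊆ ℝ^k with g(θ) := ln ∫_𝒳 e^{θ·h(x)} p(x) dx finite let p_θ(x) = p(x) e^{θ·h(x) − g(θ)}. Then the Yatracos class 𝒜_Θ = { {x ∈ 𝒳 : p_θ(x) > p_η(x)} : θ, η ∈ Θ, θ ≠ η } has VC dimension at most k + 1; that is, 𝒜_Θ shatters no subset of 𝒳 of cardinality k + 2. -/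
open MeasureTheory

/-- **The Yatracos class of a `k`-parameter exponential family has VC dimension at
most `k + 1`.**  For densities `p_θ(x) = p(x) e^{θ·h(x) - g(θ)}`, the Yatracos class
`𝒜_Θ = { {x ∈ 𝒳 : p_θ(x) > p_η(x)} : θ, η ∈ Θ, θ ≠ η }` shatters no subset of `𝒳`
of cardinality `k + 2`. -/
theorem stmt11 {d k : ℕ}
    (𝒳 : Set (EuclideanSpace ℝ (Fin d))) (h𝒳 : MeasurableSet 𝒳)
    (p : EuclideanSpace ℝ (Fin d) → ℝ) (hpm : Measurable p) (hp0 : ∀ x, 0 ≤ p x)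
    (hp1 : ∫ x in 𝒳, p x = 1)
    (h : Fin k → EuclideanSpace ℝ (Fin d) → ℝ)
    (Θ : Set (EuclideanSpace ℝ (Fin k)))
    (g : EuclideanSpace ℝ (Fin k) → ℝ)
    (hg : ∀ θ ∈ Θ, g θ = Real.log (∫ x in 𝒳, Real.exp (∑ i, θ i * h i x) * p x))
    (pθ : EuclideanSpace ℝ (Fin k) → EuclideanSpace ℝ (Fin d) → ℝ)
    (hpθ : ∀ θ x, pθ θ x = p x * Real.exp (∑ i, θ i * h i x - g θ))
    (𝒜 : Set (Set (EuclideanSpace ℝ (Fin d))))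
    (h𝒜 : 𝒜 = {s | ∃ θ ∈ Θ, ∃ η ∈ Θ, θ ≠ η ∧ s = {x ∈ 𝒳 | pθ θ x > pθ η x}})
    (S : Finset (EuclideanSpace ℝ (Fin d))) (hS𝒳 : ↑S ⊆ 𝒳)
    (hScard : S.card = k + 2) :
    ¬ Shatters 𝒜 S := by
  classical
  intro hshat
  -- Every point of S has positive density `p`.
  have hppos : ∀ x ∈ S, 0 < p x := by
    obtain ⟨A, hA, hSA⟩ := hshat S (subset_refl S)
    intro x hx
    have hxA : x ∈ A := by
      have : x ∈ (S : Set _) ∩ A := by rw [hSA]; exact_mod_cast hx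
      exact this.2
    rw [h𝒜] at hA
    obtain ⟨θ, hθ, η, hη, hne, rfl⟩ := hA
    have hgt : pθ θ x > pθ η x := hxA.2
    rw [hpθ, hpθ] at hgt
    nlinarith [Real.exp_pos (∑ i, θ i * h i x - g θ),
      Real.exp_pos (∑ i, η i * h i x - g η), hp0 x]
  -- Set up the (k+1)-dimensional space of functions on S.
  set ι := {x // x ∈ S} with hι
  have hcard : Fintype.card ι = k + 2 := by
    rw [Fintype.card_coe, hScard]
  set V : Fin k ⊕ Unit → (ι → ℝ) :=
    Sum.elim (fun i x => h i x.1) (fun _ _ => 1) with hV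
  set W : Submodule ℝ (ι → ℝ) := Submodule.span ℝ (Set.range V) with hW
  have hWlt : W < ⊤ := by
    apply Submodule.lt_top_of_finrank_lt_finrank
    have h1 : Module.finrank ℝ W ≤ Fintype.card (Fin k ⊕ Unit) :=
      finrank_range_le_card V
    have h2 : Module.finrank ℝ (ι → ℝ) = k + 2 := by
      rw [Module.finrank_pi, hcard]
    simp only [Fintype.card_sum, Fintype.card_fin, Fintype.card_unit] at h1
    omega
  obtain ⟨φ, hφ0, hφW⟩ := W.exists_dual_map_eq_bot_of_lt_top hWlt inferInstance
  have hφker : ∀ v ∈ W, φ v = 0 := by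
    intro v hv
    have : φ v ∈ W.map φ := Submodule.mem_map_of_mem hv
    rwa [hφW, Submodule.mem_bot] at this
  set lam : ι → ℝ := fun x => φ (Pi.single x 1) with hlam
  have hφeq : ∀ v : ι → ℝ, φ v = ∑ x, v x * lam x := by
    intro v
    have hv : v = ∑ x : ι, v x • (Pi.single x 1 : ι → ℝ) := by
      funext y
      simp [Finset.sum_apply, Pi.single_apply]
      rw [Finset.sum_eq_single y (by intro b _ hb; simp [Ne.symm hb]) (by simp)]; simp
    conv_lhs => rw [hv]
    rw [map_sum]
    simp only [_root_.map_smul, smul_eq_mul, hlam]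
  have hlamne : ∃ x : ι, lam x ≠ 0 := by
    by_contra hc
    push_neg at hc
    apply hφ0
    apply LinearMap.ext
    intro v
    rw [hφeq]
    simp [hc]
  obtain ⟨x0, hx0⟩ := hlamne
  -- Fix the sign so that `mu x0 > 0`.
  set ε : ℝ := if 0 < lam x0 then 1 else -1 with hε
  set mu : ι → ℝ := fun x => ε * lam x with hmu
  have hmu0 : 0 < mu x0 := by
    rcases lt_trichotomy (lam x0) 0 with hlt | heq | hgt
    · have : ε = -1 := by rw [hε, if_neg (by linarith)]
      rw [hmu]; simp only [this]; nlinarith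
    · exact absurd heq hx0
    · have : ε = 1 := by rw [hε, if_pos hgt]
      rw [hmu]; simp only [this]; nlinarith
  have hsum0 : ∀ v ∈ W, ∑ x : ι, v x * mu x = 0 := by
    intro v hv
    have h1 := hφker v hv
    rw [hφeq] at h1
    have h2 : ∑ x : ι, v x * mu x = ε * ∑ x : ι, v x * lam x := by
      rw [Finset.mul_sum]
      apply Finset.sum_congr rfl
      intro x _
      rw [hmu]; ring
    rw [h2, h1, mul_zero]
  -- The subset of S to be realized by shattering.
  set P : Finset (EuclideanSpace ℝ (Fin d)) :=
    Finset.image Subtype.val (Finset.univ.filter fun x : ι => 0 < mu x) with hP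
  have hPS : P ⊆ S := by
    intro x hx
    rw [hP, Finset.mem_image] at hx
    obtain ⟨y, _, rfl⟩ := hx
    exact y.2
  have hPmem : ∀ x : ι, x.1 ∈ P ↔ 0 < mu x := by
    intro x
    rw [hP, Finset.mem_image]
    constructor
    · rintro ⟨y, hy, hyx⟩
      rw [Finset.mem_filter] at hy
      have : y = x := Subtype.ext hyx
      rw [← this]; exact hy.2
    · intro hx
      exact ⟨x, Finset.mem_filter.2 ⟨Finset.mem_univ _, hx⟩, rfl⟩
  obtain ⟨A, hA, hSA⟩ := hshat P hPS
  rw [h𝒜] at hA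
  obtain ⟨θ, hθ, η, hη, hne, rfl⟩ := hA
  set F : EuclideanSpace ℝ (Fin d) → ℝ :=
    fun x => ∑ i, (θ i - η i) * h i x - (g θ - g η) with hF
  -- The restriction of F to S lies in W.
  have hFW : (fun x : ι => F x.1) ∈ W := by
    have heq : (fun x : ι => F x.1)
        = (∑ i, (θ i - η i) • V (Sum.inl i)) + (-(g θ - g η)) • V (Sum.inr ()) := by
      funext x
      simp only [hF, hV, Pi.add_apply, Pi.smul_apply, Finset.sum_apply, Sum.elim_inl,
        Sum.elim_inr, smul_eq_mul, mul_one]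
      ring
    rw [heq]
    refine Submodule.add_mem _ ?_ ?_
    · exact Submodule.sum_mem _ fun i _ =>
        Submodule.smul_mem _ _ (Submodule.subset_span ⟨Sum.inl i, rfl⟩)
    · exact Submodule.smul_mem _ _ (Submodule.subset_span ⟨Sum.inr (), rfl⟩)
  -- Membership characterization.
  have hmem : ∀ x : ι, (0 < F x.1 ↔ 0 < mu x) := by
    intro x
    have hx𝒳 : x.1 ∈ 𝒳 := hS𝒳 x.2
    have hpx : 0 < p x.1 := hppos x.1 x.2
    have hFeq : F x.1
        = (∑ i, θ i * h i x.1 - g θ) - (∑ i, η i * h i x.1 - g η) := by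
      show (∑ i, (θ i - η i) * h i x.1 - (g θ - g η)) = _
      have : ∑ i, (θ i - η i) * h i x.1
          = (∑ i, θ i * h i x.1) - ∑ i, η i * h i x.1 := by
        rw [← Finset.sum_sub_distrib]
        exact Finset.sum_congr rfl fun i _ => by ring
      rw [this]; ring
    have h1 : x.1 ∈ {y ∈ 𝒳 | pθ θ y > pθ η y} ↔ 0 < F x.1 := by
      constructor
      · rintro ⟨-, hgt⟩
        rw [hpθ, hpθ] at hgt
        have hlt := Real.exp_lt_exp.mp ((mul_lt_mul_iff_right₀ hpx).mp hgt)
        rw [hFeq]; linarith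
      · intro hFx
        refine ⟨hx𝒳, ?_⟩
        rw [hpθ, hpθ]
        apply (mul_lt_mul_iff_right₀ hpx).mpr
        apply Real.exp_lt_exp.mpr
        rw [hFeq] at hFx; linarith
    have h2 : x.1 ∈ {y ∈ 𝒳 | pθ θ y > pθ η y} ↔ 0 < mu x := by
      rw [← hPmem x]
      constructor
      · intro hx
        have : x.1 ∈ (S : Set _) ∩ {y ∈ 𝒳 | pθ θ y > pθ η y} := ⟨x.2, hx⟩
        rw [hSA] at this
        exact_mod_cast this
      · intro hx
        have : x.1 ∈ ((P : Set (EuclideanSpace ℝ (Fin d)))) := by exact_mod_cast hx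
        rw [← hSA] at this
        exact this.2
    rw [← h1, h2]
  -- Final contradiction.
  have h0 := hsum0 _ hFW
  have hterms : ∀ x : ι, 0 ≤ F x.1 * mu x := by
    intro x
    rcases lt_or_ge 0 (mu x) with hpos | hneg
    · exact le_of_lt (mul_pos ((hmem x).2 hpos) hpos)
    · have hFle : F x.1 ≤ 0 := by
        by_contra hc
        push_neg at hc
        exact absurd ((hmem x).1 hc) (not_lt.2 hneg)
      nlinarith
  have hpos : 0 < ∑ x : ι, F x.1 * mu x :=
    Finset.sum_pos' (fun x _ => hterms x)
      ⟨x0, Finset.mem_univ _, mul_pos ((hmem x0).2 hmu0) hmu0⟩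
  rw [h0] at hpos
  exact lt_irrefl 0 hpos
end
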